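/- arXiv:1712.01117 — 5 statements merged into one kernel-verified Lean document; each statement's English description precedes it below -/
import Mathlib

section
/- In the adding-object setting, for every x ∈ U: if r(x) = ∅ (i.e., there exist no indices i and j with x ∈ C i and C i ⊆ D j), then r⁺(x) = ∅ (i.e., there exist no indices i and j with x ∈ C⁺ i and C⁺ i ⊆ D⁺ j). -/
/-- in the adding-object setting, for every `x ∈ U`,
if `r(x) = ∅` (no indices `i, j` with `x ∈ C i ⊆ D j`), then `r⁺(x) = ∅`
(no indices `i, j` with `x ∈ C⁺ i ⊆ D⁺ j`). -/
theorem stmt2 {α ι κ : Type*} [Finite ι] [Finite κ]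
    (U : Set α) (hUfin : U.Finite) (a : α) (ha : a ∉ U)
    (C Cp : ι → Set α) (D Dp : κ → Set α)
    -- `𝒞` is a covering of `U`
    (hCne : ∀ i, (C i).Nonempty) (hCU : (⋃ i, C i) = U)
    -- `𝒞⁺` is a covering of `U⁺ = U ∪ {a}`
    (hCpne : ∀ i, (Cp i).Nonempty) (hCpU : (⋃ i, Cp i) = U ∪ {a})
    -- `𝒟` is a partition of `U`
    (hDne : ∀ j, (D j).Nonempty) (hDU : (⋃ j, D j) = U)
    (hDdisj : ∀ j₁ j₂, D j₁ ≠ D j₂ → Disjoint (D j₁) (D j₂))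
    -- `𝒟⁺` is a partition of `U⁺`
    (hDpne : ∀ j, (Dp j).Nonempty) (hDpU : (⋃ j, Dp j) = U ∪ {a})
    (hDpdisj : ∀ j₁ j₂, Dp j₁ ≠ Dp j₂ → Disjoint (Dp j₁) (Dp j₂))
    -- for each `i`, `C⁺ i = C i` or `C⁺ i = C i ∪ {a}`
    (hCrel : ∀ i, Cp i = C i ∨ Cp i = C i ∪ {a})
    -- for each `j`, `D⁺ j = D j` or `D⁺ j = D j ∪ {a}`
    (hDrel : ∀ j, Dp j = D j ∨ Dp j = D j ∪ {a}) :
    ∀ x ∈ U, (¬ ∃ i j, x ∈ C i ∧ C i ⊆ D j) → ¬ ∃ i j, x ∈ Cp i ∧ Cp i ⊆ Dp j := by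
  intro x hx hr ⟨i, j, hxi, hsub⟩
  apply hr
  refine ⟨i, j, ?_, ?_⟩
  · rcases hCrel i with h | h
    · rwa [h] at hxi
    · rw [h] at hxi
      rcases hxi with h' | h'
      · exact h'
      · exact absurd (h' ▸ hx) ha
  · intro y hy
    have hyU : y ∈ U := hCU ▸ Set.mem_iUnion.2 ⟨i, hy⟩
    have hya : y ≠ a := fun e => ha (e ▸ hyU)
    have hyCp : y ∈ Cp i := by
      rcases hCrel i with h | h
      · rwa [h]
      · rw [h]; exact Or.inl hy
    have := hsub hyCp
    rcases hDrel j with h | h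
    · rwa [h] at this
    · rw [h] at this
      rcases this with h' | h'
      · exact h'
      · exact absurd h' hya
end

section
/- In the adding-object setting, if (U,𝒞,𝒟) is an inconsistent covering decision approximation space, then (U⁺,𝒞⁺,𝒟⁺) is an inconsistent covering decision approximation space; that is, if there exists x ∈ U such that no indices i and j satisfy x ∈ C i ⊆ D j, then there exists y ∈ U⁺ such that no indices i and j satisfy y ∈ C⁺ i ⊆ D⁺ j. -/
/-- in the adding-object setting, if `(U,𝒞,𝒟)` is inconsistent
(there exists `x ∈ U` with no indices `i, j` satisfying `x ∈ C i ⊆ D j`),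
then `(U⁺,𝒞⁺,𝒟⁺)` is inconsistent (there exists `y ∈ U⁺ = U ∪ {a}` with no
indices `i, j` satisfying `y ∈ C⁺ i ⊆ D⁺ j`). -/
theorem stmt3 {α ι κ : Type*} [Finite ι] [Finite κ]
    (U : Set α) (hUfin : U.Finite) (a : α) (ha : a ∉ U)
    (C Cp : ι → Set α) (D Dp : κ → Set α)
    -- `𝒞` is a covering of `U`
    (hCne : ∀ i, (C i).Nonempty) (hCU : (⋃ i, C i) = U)
    -- `𝒞⁺` is a covering of `U⁺ = U ∪ {a}`
    (hCpne : ∀ i, (Cp i).Nonempty) (hCpU : (⋃ i, Cp i) = U ∪ {a})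
    -- `𝒟` is a partition of `U`
    (hDne : ∀ j, (D j).Nonempty) (hDU : (⋃ j, D j) = U)
    (hDdisj : ∀ j₁ j₂, D j₁ ≠ D j₂ → Disjoint (D j₁) (D j₂))
    -- `𝒟⁺` is a partition of `U⁺`
    (hDpne : ∀ j, (Dp j).Nonempty) (hDpU : (⋃ j, Dp j) = U ∪ {a})
    (hDpdisj : ∀ j₁ j₂, Dp j₁ ≠ Dp j₂ → Disjoint (Dp j₁) (Dp j₂))
    -- for each `i`, `C⁺ i = C i` or `C⁺ i = C i ∪ {a}`
    (hCrel : ∀ i, Cp i = C i ∨ Cp i = C i ∪ {a})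
    -- for each `j`, `D⁺ j = D j` or `D⁺ j = D j ∪ {a}`
    (hDrel : ∀ j, Dp j = D j ∨ Dp j = D j ∪ {a}) :
    (∃ x ∈ U, ¬ ∃ i j, x ∈ C i ∧ C i ⊆ D j) →
      ∃ y ∈ U ∪ {a}, ¬ ∃ i j, y ∈ Cp i ∧ Cp i ⊆ Dp j := by
  rintro ⟨x, hxU, hx⟩
  refine ⟨x, Or.inl hxU, ?_⟩
  rintro ⟨i, j, hxCp, hsub⟩
  have hxa : x ≠ a := fun h => ha (h ▸ hxU)
  have hxC : x ∈ C i := by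
    rcases hCrel i with h | h
    · rwa [h] at hxCp
    · rw [h] at hxCp
      rcases hxCp with h' | h'
      · exact h'
      · exact absurd h' hxa
  refine hx ⟨i, j, hxC, fun z hz => ?_⟩
  have hzU : z ∈ U := by rw [← hCU]; exact Set.mem_iUnion.2 ⟨i, hz⟩
  have hza : z ≠ a := fun h => ha (h ▸ hzU)
  have hzCp : z ∈ Cp i := by
    rcases hCrel i with h | h
    · rw [h]; exact hz
    · rw [h]; exact Or.inl hz
  have := hsub hzCp
  rcases hDrel j with h | h
  · rwa [h] at this
  · rw [h] at this
    rcases this with h' | h'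
    · exact h'
    · exact absurd h' hza
end

section
/- In the deleting-object setting with a finite family of coverings, for every x ∈ U⁻: R⁻(x) = R(x) ∪ {k : k ∉ R(x) and there exist indices i and j with x ∈ C⁻ k i and C⁻ k i ⊆ D⁻ j}. In particular, for every x ∈ U⁻, R(x) ⊆ R⁻(x). -/
/-- The related index set of `x` for a finite family of coverings `C k` and a partition `D`:
`R(x) = {k : ∃ i j, x ∈ C k i ∧ C k i ⊆ D j}`. -/
def relIdx {α K κ : Type*} {ι : K → Type*}
    (C : (k : K) → ι k → Set α) (D : κ → Set α) (x : α) : Set K :=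
  {k | ∃ i j, x ∈ C k i ∧ C k i ⊆ D j}

/-- in the deleting-object setting with a finite family of coverings,
for every `x ∈ U⁻ = U \ {x₀}`:
`R⁻(x) = R(x) ∪ {k : k ∉ R(x) ∧ ∃ i j, x ∈ C⁻ k i ∧ C⁻ k i ⊆ D⁻ j}`.
In particular, `R(x) ⊆ R⁻(x)` for every `x ∈ U⁻`. -/
theorem stmt7 {α K κ : Type*} [Finite K] [Finite κ] {ι : K → Type*} [∀ k, Finite (ι k)]
    (U : Set α) (hUfin : U.Finite) (x₀ : α) (hx₀ : x₀ ∈ U)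
    (C Cm : (k : K) → ι k → Set α) (D Dm : κ → Set α)
    -- each `𝒞ₖ` is a covering of `U`
    (hCne : ∀ k i, (C k i).Nonempty) (hCU : ∀ k, (⋃ i, C k i) = U)
    -- each `𝒞ₖ⁻` is a covering of `U⁻ = U \ {x₀}`
    (hCmne : ∀ k i, (Cm k i).Nonempty) (hCmU : ∀ k, (⋃ i, Cm k i) = U \ {x₀})
    -- `𝒟` is a partition of `U`
    (hDne : ∀ j, (D j).Nonempty) (hDU : (⋃ j, D j) = U)
    (hDdisj : ∀ j₁ j₂, D j₁ ≠ D j₂ → Disjoint (D j₁) (D j₂))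
    -- `𝒟⁻` is a partition of `U⁻`
    (hDmne : ∀ j, (Dm j).Nonempty) (hDmU : (⋃ j, Dm j) = U \ {x₀})
    (hDmdisj : ∀ j₁ j₂, Dm j₁ ≠ Dm j₂ → Disjoint (Dm j₁) (Dm j₂))
    -- for each `k, i`, `C⁻ k i = C k i` or `C⁻ k i = C k i \ {x₀}`, with `C⁻ k i ⊆ U⁻`
    (hCrel : ∀ k i, Cm k i = C k i ∨ Cm k i = C k i \ {x₀})
    (hCmsub : ∀ k i, Cm k i ⊆ U \ {x₀})
    -- for each `j`, `D⁻ j = D j` or `D⁻ j = D j \ {x₀}`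
    (hDrel : ∀ j, Dm j = D j ∨ Dm j = D j \ {x₀}) :
    (∀ x ∈ U \ {x₀}, relIdx Cm Dm x =
      relIdx C D x ∪
        {k | k ∉ relIdx C D x ∧ ∃ i j, x ∈ Cm k i ∧ Cm k i ⊆ Dm j}) ∧
    ∀ x ∈ U \ {x₀}, relIdx C D x ⊆ relIdx Cm Dm x := by
  have key : ∀ x ∈ U \ {x₀}, relIdx C D x ⊆ relIdx Cm Dm x := by
    rintro x ⟨hxU, hxne⟩ k ⟨i, j, hxC, hCD⟩
    have hxCm : x ∈ Cm k i := by
      rcases hCrel k i with h | h <;> rw [h]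
      · exact hxC
      · exact ⟨hxC, hxne⟩
    have hsub : Cm k i ⊆ Dm j := by
      intro y hy
      have hyD : y ∈ D j := by
        rcases hCrel k i with h | h
        · exact hCD (h ▸ hy)
        · exact hCD (h ▸ hy).1
      have hyne : y ∉ ({x₀} : Set α) := (hCmsub k i hy).2
      rcases hDrel j with h | h <;> rw [h]
      · exact hyD
      · exact ⟨hyD, hyne⟩
    exact ⟨i, j, hxCm, hsub⟩
  refine ⟨fun x hx => ?_, key⟩
  ext k
  constructor
  · intro hk
    by_cases h : k ∈ relIdx C D x
    · exact Or.inl h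
    · exact Or.inr ⟨h, hk⟩
  · rintro (hk | ⟨-, hk⟩)
    · exact key x hx hk
    · exact hk
end

section
/- Let 𝒞 be a covering of the finite set U and X ⊆ U. Then the lower approximation CL_𝒞(X) = ⋃{K ∈ 𝒞 : K ⊆ X} equals ⋃{K ∈ 𝒞 : K ⊆ X and K ∈ Md_𝒞(y) for some y ∈ U}; that is, every point covered by some block of 𝒞 contained in X is covered by a block contained in X that belongs to the minimal description of some point. -/
/-!
Every block `K ∈ 𝒞` containing `x` lies above a block that is minimal among the blocks
containing `x`, i.e. one in `Md 𝒞 x`. Since the blocks are subsets of the finite set `U`,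
there are only finitely many of them, so such a minimal block exists; if `K ⊆ X` it is
contained in `X` too, which gives the nontrivial inclusion.
-/

def IsCovering {α : Type*} (U : Set α) (𝒞 : Set (Set α)) : Prop :=
  (∀ C ∈ 𝒞, C.Nonempty) ∧ ⋃₀ 𝒞 = U

def Md {α : Type*} (𝒞 : Set (Set α)) (x : α) : Set (Set α) :=
  {K ∈ 𝒞 | x ∈ K ∧ ∀ S ∈ 𝒞, x ∈ S → S ⊆ K → S = K}

section MinimalDescription

variable {α : Type*} {𝒞 : Set (Set α)} {x : α} {K : Set α}

theorem mem_md_iff_minimal : K ∈ Md 𝒞 x ↔ Minimal (· ∈ {S ∈ 𝒞 | x ∈ S}) K := by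
  simp only [Md, minimal_iff, Set.mem_ofPred_eq, and_imp, and_assoc]
  refine and_congr_right fun _ => and_congr_right fun _ => forall₂_congr fun S _ => ?_
  exact forall₂_congr fun _ _ => eq_comm

theorem exists_mem_md_subset (h𝒞 : 𝒞.Finite) (hK : K ∈ 𝒞) (hx : x ∈ K) :
    ∃ M ∈ Md 𝒞 x, M ⊆ K := by
  obtain ⟨M, hMK, hM⟩ := (h𝒞.sep (x ∈ ·)).exists_le_minimal ⟨hK, hx⟩
  exact ⟨M, mem_md_iff_minimal.2 hM, hMK⟩

end MinimalDescription

theorem IsCovering.finite {α : Type*} {U : Set α} {𝒞 : Set (Set α)} (h𝒞 : IsCovering U 𝒞)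
    (hU : U.Finite) : 𝒞.Finite :=
  hU.finite_subsets.subset fun _ hK => h𝒞.2 ▸ Set.subset_sUnion_of_mem hK

theorem stmt8_general {α : Type*} (U : Set α) (hUfin : U.Finite)
    (𝒞 : Set (Set α)) (h𝒞 : IsCovering U 𝒞) (X : Set α) :
    ⋃₀ {K ∈ 𝒞 | K ⊆ X} = ⋃₀ {K ∈ 𝒞 | K ⊆ X ∧ ∃ y ∈ U, K ∈ Md 𝒞 y} := by
  refine subset_antisymm ?_ (Set.sUnion_mono fun K hK => ⟨hK.1, hK.2.1⟩)
  rintro x ⟨K, ⟨hK𝒞, hKX⟩, hxK⟩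
  obtain ⟨M, hM, hMK⟩ := exists_mem_md_subset (h𝒞.finite hUfin) hK𝒞 hxK
  have hxU : x ∈ U := h𝒞.2 ▸ Set.mem_sUnion_of_mem hxK hK𝒞
  exact ⟨M, ⟨hM.1, hMK.trans hKX, x, hxU, hM⟩, hM.2.1⟩

/-- for a covering `𝒞` of the finite set `U` and `X ⊆ U`, the lower
approximation `CL_𝒞(X) = ⋃{K ∈ 𝒞 : K ⊆ X}` equals
`⋃{K ∈ 𝒞 : K ⊆ X ∧ K ∈ Md_𝒞(y) for some y ∈ U}`. -/
theorem stmt8 {α : Type*} (U : Set α) (hUfin : U.Finite)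
    (𝒞 : Set (Set α)) (h𝒞 : IsCovering U 𝒞) (X : Set α) (hX : X ⊆ U) :
    ⋃₀ {K ∈ 𝒞 | K ⊆ X} = ⋃₀ {K ∈ 𝒞 | K ⊆ X ∧ ∃ y ∈ U, K ∈ Md 𝒞 y} :=
  stmt8_general U hUfin 𝒞 h𝒞 X
end

section
/- Let Δ be a family of coverings of the finite set U and 𝒟 a partition of U, and let ∪Δ denote the union covering {C : C ∈ 𝒞 for some 𝒞 ∈ Δ}. Define POS_{∪Δ}(𝒟) = ⋃_{D ∈ 𝒟} ⋃{K ∈ ∪Δ : K ⊆ D and K ∈ Md_{∪Δ}(y) for some y ∈ U}. Then (U,Δ,𝒟) is a consistent covering decision information system if and only if POS_{∪Δ}(𝒟) = U. -/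
/-- `𝒟` is a partition of `U`: a covering whose members are pairwise disjoint. -/
def IsPartitionOf {α : Type*} (U : Set α) (𝒟 : Set (Set α)) : Prop :=
  IsCovering U 𝒟 ∧ ∀ D₁ ∈ 𝒟, ∀ D₂ ∈ 𝒟, D₁ ≠ D₂ → Disjoint D₁ D₂

/-!
Every block of the union covering lies in the finite set `U`, so among the blocks containing
`x` and contained in a given block `K` there is a minimal one, which is a minimal description
of `x`. Hence a point lies in a block inside some decision class exactly when it lies in a
minimal description inside that class, i.e. in the positive region.
-/

/-- The positive region `POS_𝒞(𝒟)` of the paper. -/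
def posRegion {α : Type*} (U : Set α) (𝒞 𝒟 : Set (Set α)) : Set α :=
  ⋃ D ∈ 𝒟, ⋃₀ {K ∈ 𝒞 | K ⊆ D ∧ ∃ y ∈ U, K ∈ Md 𝒞 y}

section

variable {α : Type*} {U : Set α} {𝒞 𝒟 : Set (Set α)} {x : α} {K : Set α}

theorem mem_Md_iff_minimal : K ∈ Md 𝒞 x ↔ Minimal (fun S => S ∈ 𝒞 ∧ x ∈ S) K :=
  ⟨fun ⟨hK, hxK, hmin⟩ => ⟨⟨hK, hxK⟩, fun S ⟨hS, hxS⟩ hSK => (hmin S hS hxS hSK).ge⟩,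
    fun h => ⟨h.prop.1, h.prop.2, fun _ hS hxS hSK => h.eq_of_le ⟨hS, hxS⟩ hSK⟩⟩

theorem exists_mem_Md_subset (h𝒞 : 𝒞.Finite) (hK : K ∈ 𝒞) (hxK : x ∈ K) :
    ∃ K' ∈ Md 𝒞 x, K' ⊆ K := by
  obtain ⟨K', hK'K, hmin⟩ :=
    (h𝒞.subset fun _ hS => hS.1).exists_le_minimal (show K ∈ {S | S ∈ 𝒞 ∧ x ∈ S} from ⟨hK, hxK⟩)
  exact ⟨K', mem_Md_iff_minimal.mpr hmin, hK'K⟩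

theorem posRegion_subset (h𝒞U : ∀ K ∈ 𝒞, K ⊆ U) : posRegion U 𝒞 𝒟 ⊆ U :=
  Set.iUnion₂_subset fun _ _ => Set.sUnion_subset fun K hK => h𝒞U K hK.1

theorem mem_posRegion_iff (h𝒞 : 𝒞.Finite) (hx : x ∈ U) :
    x ∈ posRegion U 𝒞 𝒟 ↔ ∃ K ∈ 𝒞, ∃ D ∈ 𝒟, x ∈ K ∧ K ⊆ D := by
  simp only [posRegion, Set.mem_iUnion₂, Set.mem_sUnion]
  constructor
  · rintro ⟨D, hD, K, ⟨hK, hKD, -⟩, hxK⟩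
    exact ⟨K, hK, D, hD, hxK, hKD⟩
  · rintro ⟨K, hK, D, hD, hxK, hKD⟩
    obtain ⟨K', hK'Md, hK'K⟩ := exists_mem_Md_subset h𝒞 hK hxK
    exact ⟨D, hD, K', ⟨hK'Md.1, hK'K.trans hKD, x, hx, hK'Md⟩, hK'Md.2.1⟩

theorem forall_exists_subset_iff_posRegion_eq (hU : U.Finite) (h𝒞U : ∀ K ∈ 𝒞, K ⊆ U) :
    (∀ x ∈ U, ∃ K ∈ 𝒞, ∃ D ∈ 𝒟, x ∈ K ∧ K ⊆ D) ↔ posRegion U 𝒞 𝒟 = U := by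
  rw [Set.Subset.antisymm_iff, and_iff_right (posRegion_subset h𝒞U)]
  exact forall₂_congr fun x hx => (mem_posRegion_iff (hU.finite_subsets.subset h𝒞U) hx).symm

end

theorem subset_of_mem_sUnion_of_isCovering {α : Type*} {U : Set α} {Δ : Set (Set (Set α))}
    (hΔ : ∀ 𝒞 ∈ Δ, IsCovering U 𝒞) : ∀ K ∈ ⋃₀ Δ, K ⊆ U := by
  rintro K ⟨𝒞, h𝒞, hK⟩
  exact (hΔ 𝒞 h𝒞).2 ▸ Set.subset_sUnion_of_mem hK

theorem stmt9_general {α : Type*} (U : Set α) (hUfin : U.Finite)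
    (Δ : Set (Set (Set α))) (hΔ : ∀ 𝒞 ∈ Δ, IsCovering U 𝒞)
    (𝒟 : Set (Set α)) :
    (∀ x ∈ U, ∃ K ∈ ⋃₀ Δ, ∃ D ∈ 𝒟, x ∈ K ∧ K ⊆ D) ↔
      (⋃ D ∈ 𝒟, ⋃₀ {K ∈ ⋃₀ Δ | K ⊆ D ∧ ∃ y ∈ U, K ∈ Md (⋃₀ Δ) y}) = U :=
  forall_exists_subset_iff_posRegion_eq hUfin (subset_of_mem_sUnion_of_isCovering hΔ)

/-- for a family `Δ` of coverings of the finite set `U` and a partition `𝒟`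
of `U`, with `∪Δ = ⋃₀ Δ` the union covering and
`POS_{∪Δ}(𝒟) = ⋃_{D ∈ 𝒟} ⋃{K ∈ ∪Δ : K ⊆ D ∧ K ∈ Md_{∪Δ}(y) for some y ∈ U}`,
the system `(U,Δ,𝒟)` is consistent iff `POS_{∪Δ}(𝒟) = U`. -/
theorem stmt9 {α : Type*} (U : Set α) (hUfin : U.Finite)
    (Δ : Set (Set (Set α))) (hΔ : ∀ 𝒞 ∈ Δ, IsCovering U 𝒞)
    (𝒟 : Set (Set α)) (h𝒟 : IsPartitionOf U 𝒟) :
    (∀ x ∈ U, ∃ K ∈ ⋃₀ Δ, ∃ D ∈ 𝒟, x ∈ K ∧ K ⊆ D) ↔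
      (⋃ D ∈ 𝒟, ⋃₀ {K ∈ ⋃₀ Δ | K ⊆ D ∧ ∃ y ∈ U, K ∈ Md (⋃₀ Δ) y}) = U :=
  stmt9_general U hUfin Δ hΔ 𝒟
end
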